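/- Let (A_b, f_b) be the one-dimensional double extension of a quadratic Lie algebra (A, f) by an f-skew-symmetric derivation d. Then (A_b, f_b) is reduced if and only if the following three conditions hold: d is not an inner derivation of A, the derived algebra of A_b equals (im d + [A,A]) ⊕ Kβ, and Z(A) ∩ ker d ⊆ im d + [A,A]. -/
import Mathlib


open Module

variable {K A : Type*}

/-- The bracket of the one-dimensional double extension `A_b = Kb ⊕ A ⊕ Kβ` of `(A,f)`
by an `f`-skew-symmetric derivation `d`. -/
def odeBr [Field K] [LieRing A] [LieAlgebra K A]
    (f : A →ₗ[K] A →ₗ[K] K) (d : A →ₗ[K] A)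
    (X Y : K × A × K) : K × A × K :=
  (0, X.1 • d Y.2.1 - Y.1 • d X.2.1 + ⁅X.2.1, Y.2.1⁆, f (d X.2.1) Y.2.1)

/-- The derived algebra of a Lie algebra, as a submodule. -/
def derivedSub (K A : Type*) [Field K] [LieRing A] [LieAlgebra K A] : Submodule K A :=
  Submodule.span K {z | ∃ x y : A, z = ⁅x, y⁆}

section Aux

variable [Field K] [LieRing A] [LieAlgebra K A]
variable (f : A →ₗ[K] A →ₗ[K] K) (d : A →ₗ[K] A)

/-- The derived submodule of the double extension. -/
abbrev odeD : Submodule K (K × A × K) :=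
  Submodule.span K {z : K × A × K | ∃ X' Y', z = odeBr f d X' Y'}

lemma gen_mem (X Y : K × A × K) : odeBr f d X Y ∈ odeD f d :=
  Submodule.subset_span ⟨X, Y, rfl⟩

lemma mem_dy (y : A) : ((0, d y, 0) : K × A × K) ∈ odeD f d := by
  simpa [odeBr] using gen_mem f d (1, 0, 0) (0, y, 0)

lemma mem_br (x y : A) : ((0, ⁅x, y⁆, f (d x) y) : K × A × K) ∈ odeD f d := by
  simpa [odeBr] using gen_mem f d (0, x, 0) (0, y, 0)

lemma D_le : odeD f d ≤
    Submodule.prod (⊥ : Submodule K K)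
      (Submodule.prod (LinearMap.range d ⊔ derivedSub K A) (⊤ : Submodule K K)) := by
  rw [Submodule.span_le]
  rintro z ⟨X, Y, rfl⟩
  refine Submodule.mem_prod.2 ⟨rfl, Submodule.mem_prod.2 ⟨?_, trivial⟩⟩
  refine add_mem (sub_mem ?_ ?_) (Submodule.mem_sup_right (Submodule.subset_span ⟨_, _, rfl⟩))
  · exact Submodule.smul_mem _ _ (Submodule.mem_sup_left ⟨_, rfl⟩)
  · exact Submodule.smul_mem _ _ (Submodule.mem_sup_left ⟨_, rfl⟩)

lemma mem_e3 [FiniteDimensional K A]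
    (hnd : ∀ x, (∀ y, f x y = 0) → x = 0)
    (hinv : ∀ x y z, f ⁅x, y⁆ z = f x ⁅y, z⁆)
    (hni : ¬ ∃ x : A, ∀ a : A, d a = ⁅x, a⁆) :
    ((0, 0, 1) : K × A × K) ∈ odeD f d := by
  by_contra he
  set D := odeD f d with hDdef
  have h1 : (Submodule.Quotient.mk ((0,0,1) : K × A × K) : (K × A × K) ⧸ D) ≠ 0 :=
    fun h => he ((Submodule.Quotient.mk_eq_zero D).1 h)
  have h2 : ¬ ∀ φ : Module.Dual K ((K × A × K) ⧸ D),
      φ (Submodule.Quotient.mk ((0,0,1) : K × A × K)) = 0 := by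
    rw [Module.forall_dual_apply_eq_zero_iff]; exact h1
  push_neg at h2
  obtain ⟨φ, hφ⟩ := h2
  set Φ : (K × A × K) →ₗ[K] K := φ.comp D.mkQ with hΦdef
  have hΦD : ∀ z ∈ D, Φ z = 0 := by
    intro z hz
    have : D.mkQ z = 0 := (Submodule.Quotient.mk_eq_zero D).2 hz
    simp [hΦdef, LinearMap.comp_apply, this]
  have hc : Φ (0,0,1) ≠ 0 := hφ
  set c := Φ (0,0,1) with hcdef
  -- the functional a ↦ Φ (0, a, 0)
  set j : A →ₗ[K] K × A × K := LinearMap.prod 0 (LinearMap.prod LinearMap.id 0) with hjdef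
  have hja : ∀ a : A, j a = (0, a, 0) := fun a => rfl
  set ψ : Module.Dual K A := Φ.comp j with hψdef
  -- surjectivity of a ↦ f a
  have hinj : Function.Injective f := by
    intro x y hxy
    have h0 : f (x - y) = 0 := by rw [map_sub, hxy, sub_self]
    have := hnd (x - y) (fun z => by rw [h0]; rfl)
    exact sub_eq_zero.1 this
  have hsurj : Function.Surjective f :=
    (LinearMap.injective_iff_surjective_of_finrank_eq_finrank
      (Subspace.dual_finrank_eq).symm).1 hinj
  obtain ⟨a₀, ha₀⟩ := hsurj ψ
  have key : ∀ x y : A, f a₀ ⁅x, y⁆ + f (d x) y * c = 0 := by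
    intro x y
    have hmem := hΦD _ (mem_br f d x y)
    have hdec : ((0, ⁅x, y⁆, f (d x) y) : K × A × K)
        = j ⁅x, y⁆ + (f (d x) y) • ((0,0,1) : K × A × K) := by
      rw [hja]
      ext <;> simp
    rw [hdec, map_add, map_smul] at hmem
    have : ψ ⁅x, y⁆ + f (d x) y * c = 0 := by
      simpa [hψdef, smul_eq_mul] using hmem
    rw [← ha₀] at this
    exact this
  have keyx : ∀ x : A, ⁅a₀, x⁆ + c • d x = 0 := by
    intro x
    apply hnd
    intro y
    have : f ⁅a₀, x⁆ y + c * f (d x) y = 0 := by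
      rw [hinv a₀ x y, mul_comm c]
      exact key x y
    simpa [map_add, LinearMap.add_apply, LinearMap.smul_apply, smul_eq_mul] using this
  exact hni ⟨(-c⁻¹) • a₀, fun a => by
    have h := keyx a
    have h' : ⁅a₀, a⁆ = -(c • d a) := by linear_combination (norm := abel) h
    rw [smul_lie, h', smul_neg, smul_smul, neg_mul, inv_mul_cancel₀ hc, neg_smul, one_smul, neg_neg]⟩

lemma mem_of_sup (he : ((0,0,1) : K × A × K) ∈ odeD f d) :
    ∀ m ∈ LinearMap.range d ⊔ derivedSub K A, ((0, m, 0) : K × A × K) ∈ odeD f d := by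
  set j : A →ₗ[K] K × A × K := LinearMap.prod 0 (LinearMap.prod LinearMap.id 0) with hjdef
  have hja : ∀ a : A, j a = (0, a, 0) := fun a => rfl
  have hle : LinearMap.range d ⊔ derivedSub K A ≤ (odeD f d).comap j := by
    apply sup_le
    · rintro _ ⟨y, rfl⟩
      exact mem_dy f d y
    · rw [derivedSub, Submodule.span_le]
      rintro _ ⟨x, y, rfl⟩
      have hmem := Submodule.sub_mem _ (mem_br f d x y)
        (Submodule.smul_mem _ (f (d x) y) he)
      have : ((0, ⁅x, y⁆, f (d x) y) : K × A × K)
          - (f (d x) y) • ((0,0,1) : K × A × K) = (0, ⁅x, y⁆, 0) := by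
        ext <;> simp
      rwa [this] at hmem
  intro m hm
  exact hle hm

end Aux

/-- The one-dimensional double extension `(A_b, f_b)` of `(A, f)` by `d` is reduced
(its centre is contained in its derived algebra) if and only if `d` is not inner,
the derived algebra of `A_b` equals `(im d + [A,A]) ⊕ Kβ`, and
`Z(A) ∩ ker d ⊆ im d + [A,A]`. -/
theorem stmt3 [Field K] [CharZero K] [LieRing A] [LieAlgebra K A] [FiniteDimensional K A]
    (f : A →ₗ[K] A →ₗ[K] K)
    (hsymm : ∀ x y, f x y = f y x)
    (hnd : ∀ x, (∀ y, f x y = 0) → x = 0)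
    (hinv : ∀ x y z, f ⁅x, y⁆ z = f x ⁅y, z⁆)
    (d : A →ₗ[K] A)
    (hder : ∀ x y : A, d ⁅x, y⁆ = ⁅d x, y⁆ + ⁅x, d y⁆)
    (hdskew : ∀ x y : A, f (d x) y + f x (d y) = 0) :
    (∀ X : K × A × K, (∀ Y, odeBr f d X Y = 0) →
        X ∈ Submodule.span K {z : K × A × K | ∃ X' Y', z = odeBr f d X' Y'})
    ↔
    ((¬ ∃ x : A, ∀ a : A, d a = ⁅x, a⁆) ∧
     (Submodule.span K {z : K × A × K | ∃ X' Y', z = odeBr f d X' Y'} =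
        Submodule.prod (⊥ : Submodule K K)
          (Submodule.prod (LinearMap.range d ⊔ derivedSub K A) (⊤ : Submodule K K))) ∧
     (∀ a : A, (∀ y : A, ⁅a, y⁆ = 0) → d a = 0 →
        a ∈ LinearMap.range d ⊔ derivedSub K A)) := by
  constructor
  · intro hred
    have hni : ¬ ∃ x : A, ∀ a : A, d a = ⁅x, a⁆ := by
      rintro ⟨x₀, hx₀⟩
      have hdx₀ : d x₀ = 0 := by rw [hx₀]; exact lie_self x₀
      have hc : ((1 : K), -x₀, (0 : K)) ∈ odeD f d := by
        apply hred
        intro Y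
        have hmid : (1 : K) • d Y.2.1 - Y.1 • d (-x₀) + ⁅-x₀, Y.2.1⁆ = 0 := by
          rw [map_neg, hdx₀, neg_zero, smul_zero, sub_zero, one_smul, neg_lie,
            ← hx₀, add_neg_cancel]
        have hlast : f (d (-x₀)) Y.2.1 = 0 := by
          rw [map_neg, hdx₀, neg_zero, map_zero, LinearMap.zero_apply]
        show ((0 : K), _, _) = (0 : K × A × K)
        rw [hmid, hlast]; rfl
      have := D_le f d hc
      rw [Submodule.mem_prod] at this
      exact one_ne_zero ((Submodule.mem_bot K).1 this.1)
    have he₃ := mem_e3 f d hnd hinv hni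
    refine ⟨hni, ?_, ?_⟩
    · apply le_antisymm (D_le f d)
      rintro ⟨b, a, β⟩ hz
      rw [Submodule.mem_prod, Submodule.mem_prod] at hz
      obtain ⟨h1, h2, -⟩ := hz
      have hb : b = 0 := (Submodule.mem_bot K).1 h1
      have hdec : ((b, a, β) : K × A × K)
          = (0, a, 0) + β • ((0,0,1) : K × A × K) := by
        rw [hb]; ext <;> simp
      rw [hdec]
      exact Submodule.add_mem _ (mem_of_sup f d he₃ a h2)
        (Submodule.smul_mem _ _ he₃)
    · intro a hZ hk
      have hc : ((0 : K), a, (0 : K)) ∈ odeD f d := by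
        apply hred
        intro Y
        show ((0 : K), _, _) = (0 : K × A × K)
        rw [hk]
        simp [hZ Y.2.1]
      have := D_le f d hc
      rw [Submodule.mem_prod, Submodule.mem_prod] at this
      exact this.2.1
  · rintro ⟨hni, hD, h3⟩ X hX
    have he₃ := mem_e3 f d hnd hinv hni
    have hda : d X.2.1 = 0 := by
      apply hnd
      intro y
      have := congrArg (fun z : K × A × K => z.2.2) (hX (0, y, 0))
      simpa [odeBr] using this
    have hmid : ∀ y : A, X.1 • d y + ⁅X.2.1, y⁆ = 0 := by
      intro y
      have := congrArg (fun z : K × A × K => z.2.1) (hX (0, y, 0))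
      simpa [odeBr, hda] using this
    have hb : X.1 = 0 := by
      by_contra hb
      refine hni ⟨(-X.1⁻¹) • X.2.1, fun a => ?_⟩
      have h := hmid a
      have h' : ⁅X.2.1, a⁆ = -(X.1 • d a) := by
        linear_combination (norm := abel) h
      rw [smul_lie, h', smul_neg, smul_smul, neg_mul, inv_mul_cancel₀ hb,
        neg_smul, one_smul, neg_neg]
    have hZ : ∀ y : A, ⁅X.2.1, y⁆ = 0 := by
      intro y
      have := hmid y
      rwa [hb, zero_smul, zero_add] at this
    have ha : X.2.1 ∈ LinearMap.range d ⊔ derivedSub K A := h3 _ hZ hda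
    have hdec : X = ((0 : K), X.2.1, (0 : K)) + X.2.2 • ((0,0,1) : K × A × K) := by
      obtain ⟨b, a, β⟩ := X
      simp only at hb ⊢
      rw [hb]; ext <;> simp
    rw [hdec]
    exact Submodule.add_mem _ (mem_of_sup f d he₃ _ ha) (Submodule.smul_mem _ _ he₃)
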